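/- Let (w, z, k, a) be a C² solution of the azimuthal Euler system on 𝕋 × [−ε, T) with c > 0, whose entropy data is k₀ := k(·,−ε), and let ϕ be the 2-characteristic flow, assumed C² in x. Define Φ(x,t) := 2 c₀'(x)/c₀(x) − (16/3) ∫_{−ε}^{t} ∂_x( a(ϕ(x,τ),τ) ) dτ. Then for all (x, t): (i) k(ϕ(x,t), t) = k₀(x); (ii) ϕ_x(x,t) · ∂_θk(ϕ(x,t), t) = k₀'(x); (iii) ϕ_{xx} = ϕ_x Φ − 2 ϕ_x² ((c^{−1}∂_θc)∘ϕ); and (iv) ϕ_x² · (∂²_θk∘ϕ) = k₀'' − Φ k₀' + 2 ϕ_x² ((c^{−1}∂_θc · ∂_θk)∘ϕ); equivalently, the quantity 𝓔 := ∂²_θk − 2 c^{−1}∂_θc ∂_θk satisfies 𝓔(ϕ(x,t), t) = ϕ_x(x,t)^{−2} ( k₀''(x) − Φ(x,t) k₀'(x) ). -/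

import Mathlib

open Real Set

noncomputable section

/-- Partial derivative in the spatial variable of a function of `(θ, t)`. -/
def pdx (f : ℝ → ℝ → ℝ) (x t : ℝ) : ℝ := deriv (fun y => f y t) x

/-- Partial derivative in the time variable of a function of `(θ, t)`. -/
def pdt (f : ℝ → ℝ → ℝ) (x t : ℝ) : ℝ := deriv (fun s => f x s) t

/-- The three wave speeds of the azimuthal Euler system. -/
def lam1 (w z : ℝ) : ℝ := w / 3 + z
def lam2 (w z : ℝ) : ℝ := 2 / 3 * (w + z)
def lam3 (w z : ℝ) : ℝ := w + z / 3

/-- The azimuthal Euler system (γ = 2, rescaled time) at a point. -/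
def EulerEq (w z k a : ℝ → ℝ → ℝ) (θ t : ℝ) : Prop :=
  pdt w θ t + lam3 (w θ t) (z θ t) * pdx w θ t
      = -(8 / 3) * a θ t * w θ t + 1 / 24 * (w θ t - z θ t) ^ 2 * pdx k θ t ∧
  pdt z θ t + lam1 (w θ t) (z θ t) * pdx z θ t
      = -(8 / 3) * a θ t * z θ t + 1 / 24 * (w θ t - z θ t) ^ 2 * pdx k θ t ∧
  pdt k θ t + lam2 (w θ t) (z θ t) * pdx k θ t = 0 ∧
  pdt a θ t + lam2 (w θ t) (z θ t) * pdx a θ t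
      = -(4 / 3) * a θ t ^ 2 + 1 / 3 * (w θ t + z θ t) ^ 2 - 1 / 6 * (w θ t - z θ t) ^ 2

/-- The flow of a speed field, started at time `−ε`. -/
def IsFlowOn (speed Ψ : ℝ → ℝ → ℝ) (ε : ℝ) (J : Set ℝ) : Prop :=
  (∀ x, Ψ x (-ε) = x) ∧
  ∀ x : ℝ, ∀ t ∈ J, HasDerivWithinAt (fun s => Ψ x s) (speed (Ψ x t) t) J t

/-!
Along a 2-characteristic the entropy equation `∂ₜk + λ₂ ∂_θk = 0` makes `k` constant, which is
(i); differentiating `k (ϕ x t) t = k₀ x` once and twice in `x` gives (ii) and (iv), and (iv') is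
(iv) divided by `ϕₓ² > 0`.

The spatial derivative of the flow solves the variational equation `∂ₜϕₓ = (∂_θλ₂ ∘ ϕ) ϕₓ`, so
`ϕₓ = exp ∫ ∂_θλ₂ ∘ ϕ`. Periodicity bounds `∂_θλ₂` and `∂²_θλ₂`, hence (Grönwall) `ϕₓ`, which
justifies differentiating under the integral sign and gives `ϕₓₓ = ϕₓ ∫ ∂ₓ(∂_θλ₂ ∘ ϕ)`.
For (iii) this integral is identified through `log c`: the `w`- and `z`-equations give
`∂ₜ log c + λ₂ ∂_θ log c = -(8/3) a - (1/2) ∂_θλ₂`, and whenever `∂ₜL + λ₂ ∂_θL = G`, the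
quantity `∂ₓ (L ∘ ϕ) = ϕₓ (∂_θL ∘ ϕ)` changes in time by `∂ₓ (G ∘ ϕ)`. For `L = log c` this reads
`2 ϕₓ (c⁻¹ ∂_θc ∘ ϕ) = Φ - ∫ ∂ₓ(∂_θλ₂ ∘ ϕ)`.
-/

open MeasureTheory Filter Topology
open scoped Interval NNReal

section Slices

variable {F : ℝ → ℝ → ℝ} {θ s : ℝ}

theorem ContDiffOn.contDiff_slice {n : WithTop ℕ∞} {J : Set ℝ}
    (hF : ContDiffOn ℝ n (fun p : ℝ × ℝ => F p.1 p.2) (univ ×ˢ J)) (hs : s ∈ J) :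
    ContDiff ℝ n (fun y => F y s) := by
  rw [← contDiffOn_univ]
  exact hF.comp (contDiff_id.prodMk contDiff_const).contDiffOn fun y _ => ⟨mem_univ y, hs⟩

theorem HasFDerivAt.hasDerivAt_slice_fst {D : ℝ × ℝ →L[ℝ] ℝ}
    (hF : HasFDerivAt (fun p : ℝ × ℝ => F p.1 p.2) D (θ, s)) :
    HasDerivAt (fun y => F y s) (D (1, 0)) θ :=
  hF.comp_hasDerivAt (f := fun y => (y, s)) θ ((hasDerivAt_id' θ).prodMk (hasDerivAt_const θ s))

theorem HasFDerivAt.hasDerivAt_slice_snd {D : ℝ × ℝ →L[ℝ] ℝ}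
    (hF : HasFDerivAt (fun p : ℝ × ℝ => F p.1 p.2) D (θ, s)) :
    HasDerivAt (fun r => F θ r) (D (0, 1)) s :=
  hF.comp_hasDerivAt (f := fun r => (θ, r)) s ((hasDerivAt_const s θ).prodMk (hasDerivAt_id' s))

theorem DifferentiableAt.hasDerivAt_pdx
    (hF : DifferentiableAt ℝ (fun p : ℝ × ℝ => F p.1 p.2) (θ, s)) :
    HasDerivAt (fun y => F y s) (pdx F θ s) θ :=
  hF.hasFDerivAt.hasDerivAt_slice_fst.differentiableAt.hasDerivAt

theorem DifferentiableAt.hasDerivAt_pdt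
    (hF : DifferentiableAt ℝ (fun p : ℝ × ℝ => F p.1 p.2) (θ, s)) :
    HasDerivAt (fun r => F θ r) (pdt F θ s) s :=
  hF.hasFDerivAt.hasDerivAt_slice_snd.differentiableAt.hasDerivAt

theorem DifferentiableAt.hasDerivAt_comp_curve {γ : ℝ → ℝ} {v : ℝ}
    (hF : DifferentiableAt ℝ (fun p : ℝ × ℝ => F p.1 p.2) (γ s, s)) (hγ : HasDerivAt γ v s) :
    HasDerivAt (fun r => F (γ r) r) (v * pdx F (γ s) s + pdt F (γ s) s) s := by
  have hD := hF.hasFDerivAt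
  rw [show pdx F (γ s) s = _ from hD.hasDerivAt_slice_fst.deriv,
    show pdt F (γ s) s = _ from hD.hasDerivAt_slice_snd.deriv]
  have hv : ((v, 1) : ℝ × ℝ) = v • ((1 : ℝ), (0 : ℝ)) + ((0 : ℝ), (1 : ℝ)) := by simp
  have := hD.comp_hasDerivAt (f := fun r => (γ r, r)) s (hγ.prodMk (hasDerivAt_id' s))
  rw [hv, map_add, map_smul, smul_eq_mul] at this
  exact this

theorem ContDiffOn.contDiffOn_pdx {n : WithTop ℕ∞} {J : Set ℝ} (hJ : UniqueDiffOn ℝ J)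
    (hF : ContDiffOn ℝ (n + 1) (fun p : ℝ × ℝ => F p.1 p.2) (univ ×ˢ J)) :
    ContDiffOn ℝ n (fun p : ℝ × ℝ => pdx F p.1 p.2) (univ ×ˢ J) := by
  have hS : UniqueDiffOn ℝ ((univ : Set ℝ) ×ˢ J) := uniqueDiffOn_univ.prod hJ
  refine ((hF.fderivWithin hS le_rfl).clm_apply
    (contDiffOn_const (c := ((1 : ℝ), (0 : ℝ))))).congr fun p hp => ?_
  have hmaps : MapsTo (fun y : ℝ => (y, p.2)) univ (univ ×ˢ J) := fun y _ => ⟨mem_univ y, hp.2⟩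
  have hD := ((hF.differentiableOn (by simp) p hp).hasFDerivWithinAt).comp_hasDerivWithinAt
    p.1 ((hasDerivAt_id' p.1).prodMk (hasDerivAt_const p.1 p.2)).hasDerivWithinAt hmaps
  exact (hasDerivWithinAt_univ.mp hD).deriv

theorem ContDiffOn.continuousOn_pdx {J : Set ℝ} (hJ : UniqueDiffOn ℝ J)
    (hF : ContDiffOn ℝ 1 (fun p : ℝ × ℝ => F p.1 p.2) (univ ×ˢ J)) :
    ContinuousOn (fun p : ℝ × ℝ => pdx F p.1 p.2) (univ ×ˢ J) :=
  (ContDiffOn.contDiffOn_pdx (n := 0) hJ (by simpa using hF)).continuousOn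

theorem prod_univ_Ico_mem_nhds {a b : ℝ} (hs : s ∈ Ioo a b) :
    (univ ×ˢ Ico a b : Set (ℝ × ℝ)) ∈ 𝓝 (θ, s) :=
  prod_mem_nhds univ_mem (Ico_mem_nhds hs.1 hs.2)

theorem hasDerivAt_pdt (hF : ContDiffAt ℝ 2 (fun p : ℝ × ℝ => F p.1 p.2) (θ, s)) :
    HasDerivAt (fun y => pdt F y s) (pdt (pdx F) θ s) θ := by
  set f : ℝ × ℝ → ℝ := fun p => F p.1 p.2
  have hdiff : ∀ᶠ p in 𝓝 (θ, s), DifferentiableAt ℝ f p :=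
    (hF.eventually (by simp)).mono fun p hp => hp.differentiableAt (by simp)
  have hD2 : HasFDerivAt (fderiv ℝ f) (fderiv ℝ (fderiv ℝ f) (θ, s)) (θ, s) :=
    ((hF.fderiv_right (m := 1) le_rfl).differentiableAt one_ne_zero).hasFDerivAt
  have hpdt : (fun y => pdt F y s) =ᶠ[𝓝 θ] fun y => fderiv ℝ f (y, s) (0, 1) := by
    have : Tendsto (fun y : ℝ => (y, s)) (𝓝 θ) (𝓝 (θ, s)) :=
      (continuous_id.prodMk continuous_const).tendsto θ
    filter_upwards [this.eventually hdiff] with y hy using hy.hasFDerivAt.hasDerivAt_slice_snd.deriv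
  have hpdx : (fun r => pdx F θ r) =ᶠ[𝓝 s] fun r => fderiv ℝ f (θ, r) (1, 0) := by
    have : Tendsto (fun r : ℝ => (θ, r)) (𝓝 s) (𝓝 (θ, s)) :=
      (continuous_const.prodMk continuous_id).tendsto s
    filter_upwards [this.eventually hdiff] with r hr using hr.hasFDerivAt.hasDerivAt_slice_fst.deriv
  have hsymm := hF.isSymmSndFDerivAt (by simp) (1, 0) (0, 1)
  have hx := (hD2.comp_hasDerivAt (f := fun y => (y, s)) θ
    ((hasDerivAt_id θ).prodMk (hasDerivAt_const θ s))).clm_apply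
    (hasDerivAt_const θ ((0 : ℝ), (1 : ℝ)))
  have ht := (hD2.comp_hasDerivAt (f := fun r => (θ, r)) s
    ((hasDerivAt_const s θ).prodMk (hasDerivAt_id s))).clm_apply
    (hasDerivAt_const s ((1 : ℝ), (0 : ℝ)))
  simp only [map_zero, add_zero, Function.comp_def] at hx ht
  rw [show pdt (pdx F) θ s = _ from (ht.congr_of_eventuallyEq hpdx).deriv, ← hsymm]
  exact hx.congr_of_eventuallyEq hpdt

theorem pdt_pdx_add_mul_pdx_pdx {v G : ℝ → ℝ → ℝ}
    (hF : ContDiffAt ℝ 2 (fun p : ℝ × ℝ => F p.1 p.2) (θ, s))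
    (hFx : DifferentiableAt ℝ (fun y => pdx F y s) θ)
    (hv : DifferentiableAt ℝ (fun y => v y s) θ) (hG : DifferentiableAt ℝ (fun y => G y s) θ)
    (htr : ∀ y, pdt F y s + v y s * pdx F y s = G y s) :
    pdt (pdx F) θ s + v θ s * pdx (pdx F) θ s = pdx G θ s - pdx v θ s * pdx F θ s := by
  have h : HasDerivAt (fun y => pdt F y s + v y s * pdx F y s)
      (pdt (pdx F) θ s + (pdx v θ s * pdx F θ s + v θ s * pdx (pdx F) θ s)) θ :=
    (hasDerivAt_pdt hF).add (hv.hasDerivAt.mul hFx.hasDerivAt)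
  have hG' : HasDerivAt (fun y => G y s) (pdx G θ s) θ := hG.hasDerivAt
  rw [funext htr] at h
  linarith [h.unique hG']

theorem pdx_log (hF : DifferentiableAt ℝ (fun y => F y s) θ) (hF0 : F θ s ≠ 0) :
    pdx (fun θ s => log (F θ s)) θ s = (F θ s)⁻¹ * pdx F θ s :=
  (hF.hasDerivAt.log hF0).deriv.trans (div_eq_inv_mul _ _)

theorem pdx_periodic {p : ℝ} (hper : ∀ s, Function.Periodic (fun θ => F θ s) p) (s : ℝ) :
    Function.Periodic (fun θ => pdx F θ s) p := fun θ =>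
  calc deriv (fun y => F y s) (θ + p) = deriv (fun y => F (y + p) s) θ :=
        (deriv_comp_add_const _ _ _).symm
    _ = pdx F θ s := by
      rw [show (fun y => F (y + p) s) = fun y => F y s from funext (hper s)]
      rfl

theorem exists_bound_of_periodic {p : ℝ} {K : Set ℝ} (hp : 0 < p) (hK : IsCompact K)
    (hF : ContinuousOn (fun q : ℝ × ℝ => F q.1 q.2) (univ ×ˢ K))
    (hper : ∀ s, Function.Periodic (fun θ => F θ s) p) :
    ∃ M : ℝ≥0, ∀ θ, ∀ s ∈ K, |F θ s| ≤ M := by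
  obtain ⟨C, hC⟩ := (isCompact_Icc.prod hK).exists_bound_of_continuousOn
    (hF.mono (prod_mono (subset_univ (Icc 0 p)) le_rfl))
  refine ⟨C.toNNReal, fun θ s hs => ?_⟩
  obtain ⟨y, hy, hθy⟩ := (hper s).exists_mem_Ico₀ hp θ
  rw [hθy]
  exact (hC (y, s) ⟨Ico_subset_Icc_self hy, hs⟩).trans (le_max_left _ _)

theorem exists_abs_pdx_le_of_periodic {p : ℝ} {J K : Set ℝ} (hp : 0 < p) (hJ : UniqueDiffOn ℝ J)
    (hF : ContDiffOn ℝ 1 (fun q : ℝ × ℝ => F q.1 q.2) (univ ×ˢ J))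
    (hper : ∀ s, Function.Periodic (fun θ => F θ s) p) (hK : IsCompact K) (hKJ : K ⊆ J) :
    ∃ M : ℝ≥0, ∀ θ, ∀ s ∈ K, |pdx F θ s| ≤ M :=
  exists_bound_of_periodic hp hK ((hF.continuousOn_pdx hJ).mono (prod_mono le_rfl hKJ))
    (pdx_periodic hper)

end Slices

section Primitive

variable {f : ℝ → ℝ} {a b : ℝ}

theorem MeasureTheory.IntegrableOn.continuousOn_primitive (hf : IntegrableOn f (Icc a b)) :
    ContinuousOn (fun x => ∫ τ in a..x, f τ) (Icc a b) := by
  rcases lt_or_ge b a with hba | hab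
  · simp [Icc_eq_empty_of_lt hba]
  have := intervalIntegral.continuousOn_primitive_interval (μ := volume)
    (by rwa [uIcc_of_le hab] : IntegrableOn f (uIcc a b))
  rwa [uIcc_of_le hab] at this

theorem ContinuousOn.hasDerivAt_primitive (hf : ContinuousOn f (Icc a b)) {x : ℝ}
    (hx : x ∈ Ioo a b) : HasDerivAt (fun y => ∫ τ in a..y, f τ) (f x) x := by
  have hnhds : Icc a b ∈ 𝓝 x := Icc_mem_nhds hx.1 hx.2
  refine intervalIntegral.integral_hasDerivAt_right ?_
    ⟨Icc a b, hnhds, hf.aestronglyMeasurable measurableSet_Icc⟩ (hf.continuousAt hnhds)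
  exact (hf.mono (Icc_subset_Icc_right hx.2.le)).intervalIntegrable_of_Icc hx.1.le

theorem eq_exp_integral_of_eq_one_add_integral {g q : ℝ → ℝ} (hq : ContinuousOn q (Icc a b))
    (hqg : IntegrableOn (fun τ => q τ * g τ) (Icc a b))
    (hg : ∀ s ∈ Icc a b, g s = 1 + ∫ τ in a..s, q τ * g τ) :
    ∀ s ∈ Icc a b, g s = exp (∫ τ in a..s, q τ) := by
  intro s hs
  have hab : a ≤ b := hs.1.trans hs.2
  have hgc : ContinuousOn g (Icc a b) :=
    (continuousOn_const.add (hqg.continuousOn_primitive)).congr hg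
  have hQc : ContinuousOn (fun r => ∫ τ in a..r, q τ) (Icc a b) :=
    (hq.integrableOn_compact isCompact_Icc).continuousOn_primitive
  set h : ℝ → ℝ := fun r => g r * exp (-∫ τ in a..r, q τ)
  have hderiv : ∀ r ∈ Ioo a s, HasDerivAt h 0 r := by
    intro r hr
    have hr' : r ∈ Ioo a b := ⟨hr.1, hr.2.trans_le hs.2⟩
    have hg' : HasDerivAt g (q r * g r) r := by
      refine (((hq.mul hgc).hasDerivAt_primitive hr').const_add 1).congr_of_eventuallyEq ?_
      filter_upwards [Icc_mem_nhds hr'.1 hr'.2] with u hu using hg u hu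
    have hE : HasDerivAt (fun r => exp (-∫ τ in a..r, q τ)) (exp (-∫ τ in a..r, q τ) * -q r) r :=
      (hq.hasDerivAt_primitive hr').neg.exp
    have hgE := hg'.mul hE
    rwa [show q r * g r * exp (-∫ τ in a..r, q τ) + g r * (exp (-∫ τ in a..r, q τ) * -q r) = 0
      by ring] at hgE
  have hhc : ContinuousOn h (Icc a s) :=
    (hgc.mul (hQc.neg.rexp)).mono (Icc_subset_Icc_right hs.2)
  have hconst := intervalIntegral.integral_eq_sub_of_hasDerivAt_of_le hs.1 hhc hderiv (by simp)
  have hga : g a = 1 := by simpa using hg a ⟨le_rfl, hab⟩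
  simp only [intervalIntegral.integral_zero, h, hga, intervalIntegral.integral_same, neg_zero,
    exp_zero, mul_one] at hconst
  rw [exp_neg] at hconst
  field_simp at hconst
  linarith

end Primitive

theorem deriv_deriv_comp {f g : ℝ → ℝ} {x : ℝ} (hf : Differentiable ℝ f) (hg : Differentiable ℝ g)
    (hf' : DifferentiableAt ℝ (deriv f) (g x)) (hg' : DifferentiableAt ℝ (deriv g) x) :
    deriv (deriv (f ∘ g)) x
      = deriv (deriv f) (g x) * deriv g x ^ 2 + deriv f (g x) * deriv (deriv g) x := by
  have hfg : deriv (f ∘ g) = fun y => deriv f (g y) * deriv g y :=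
    funext fun y => deriv_comp y (hf (g y)) (hg y)
  have hd : HasDerivAt (fun y => deriv f (g y) * deriv g y)
      (deriv (deriv f) (g x) * deriv g x * deriv g x + deriv f (g x) * deriv (deriv g) x) x :=
    (hf'.hasDerivAt.comp x (hg x).hasDerivAt).mul hg'.hasDerivAt
  rw [hfg, hd.deriv]
  ring

section Composition

variable {F Ψ : ℝ → ℝ → ℝ} {F₀ : ℝ → ℝ} {t : ℝ}

theorem pdx_mul_pdx_comp_eq_deriv (hF : Differentiable ℝ (fun θ => F θ t))
    (hΨ : Differentiable ℝ (fun y => Ψ y t)) (h : ∀ y, F (Ψ y t) t = F₀ y) (y : ℝ) :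
    pdx Ψ y t * pdx F (Ψ y t) t = deriv F₀ y := by
  rw [← funext h, mul_comm]
  exact (deriv_comp (h₂ := fun θ => F θ t) y (hF _) (hΨ y)).symm

theorem iteratedDeriv_two_eq_of_comp (hF : ContDiff ℝ 2 (fun θ => F θ t))
    (hΨ : ContDiff ℝ 2 (fun y => Ψ y t)) (h : ∀ y, F (Ψ y t) t = F₀ y) (x : ℝ) :
    iteratedDeriv 2 F₀ x = pdx (fun θ s => pdx F θ s) (Ψ x t) t * pdx Ψ x t ^ 2
      + pdx F (Ψ x t) t * pdx (fun y s => pdx Ψ y s) x t := by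
  rw [iteratedDeriv_succ, iteratedDeriv_one, ← funext h]
  exact deriv_deriv_comp (f := fun θ => F θ t) (hF.differentiable two_ne_zero)
    (hΨ.differentiable two_ne_zero)
    (by simpa only [iteratedDeriv_one] using hF.differentiable_iteratedDeriv 1 (by norm_num) _)
    (by simpa only [iteratedDeriv_one] using hΨ.differentiable_iteratedDeriv 1 (by norm_num) x)

end Composition

section ParametricIntegral

variable {F Ψ : ℝ → ℝ → ℝ} {x : ℝ}

theorem hasDerivAt_pdx_comp {σ : ℝ} (hF : DifferentiableAt ℝ (fun θ => F θ σ) (Ψ x σ))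
    (hΨ : DifferentiableAt ℝ (fun y => Ψ y σ) x) :
    HasDerivAt (fun y => F (Ψ y σ) σ) (pdx F (Ψ x σ) σ * pdx Ψ x σ) x := by
  exact hF.hasDerivAt.comp (h₂ := fun θ => F θ σ) x hΨ.hasDerivAt

theorem pdx_comp {σ : ℝ} (hF : DifferentiableAt ℝ (fun θ => F θ σ) (Ψ x σ))
    (hΨ : DifferentiableAt ℝ (fun y => Ψ y σ) x) :
    pdx (fun y σ => F (Ψ y σ) σ) x σ = pdx F (Ψ x σ) σ * pdx Ψ x σ :=
  (hasDerivAt_pdx_comp hF hΨ).deriv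

/-- `pdx Ψ x` is the pointwise limit of the difference quotients `n (Ψ (x + 1/n) - Ψ x)`,
which are continuous on `S`. -/
theorem aestronglyMeasurable_pdx {S : Set ℝ} (hS : MeasurableSet S)
    (hc : ∀ y, ContinuousOn (fun σ => Ψ y σ) S)
    (hd : ∀ σ ∈ S, DifferentiableAt ℝ (fun y => Ψ y σ) x) :
    AEStronglyMeasurable (fun σ => pdx Ψ x σ) (volume.restrict S) := by
  set h : ℕ → ℝ := fun n => 1 / ((n : ℝ) + 1)
  have hh : Tendsto h atTop (𝓝[≠] 0) :=
    tendsto_nhdsWithin_of_tendsto_nhds_of_eventually_within _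
      tendsto_one_div_add_atTop_nhds_zero_nat
      (Eventually.of_forall fun n => (show 0 < h n by simp only [h]; positivity).ne')
  refine aestronglyMeasurable_of_tendsto_ae atTop
    (f := fun n σ => (h n)⁻¹ • (Ψ (x + h n) σ - Ψ x σ)) (fun n => ?_) ?_
  · refine ContinuousOn.aestronglyMeasurable ?_ hS
    exact ((hc _).sub (hc x)).const_smul (h n)⁻¹
  · rw [ae_restrict_iff' hS]
    exact ae_of_all _ fun σ hσ => (hd σ hσ).hasDerivAt.tendsto_slope_zero.comp hh

theorem hasDerivAt_integral_comp {a b M B : ℝ} (hab : a ≤ b)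
    (hF : ContinuousOn (fun p : ℝ × ℝ => F p.1 p.2) (univ ×ˢ Icc a b))
    (hFx : ContinuousOn (fun p : ℝ × ℝ => pdx F p.1 p.2) (univ ×ˢ Icc a b))
    (hFd : ∀ σ ∈ Icc a b, Differentiable ℝ (fun θ => F θ σ))
    (hFM : ∀ θ, ∀ σ ∈ Icc a b, |pdx F θ σ| ≤ M)
    (hΨc : ∀ y, ContinuousOn (fun σ => Ψ y σ) (Icc a b))
    (hΨd : ∀ σ ∈ Icc a b, Differentiable ℝ (fun y => Ψ y σ))
    (hΨB : ∀ y, ∀ σ ∈ Icc a b, |pdx Ψ y σ| ≤ B) :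
    HasDerivAt (fun y => ∫ σ in a..b, F (Ψ y σ) σ)
      (∫ σ in a..b, pdx (fun y σ => F (Ψ y σ) σ) x σ) x := by
  have hcurve : ∀ y, ContinuousOn (fun σ => (Ψ y σ, σ)) (Icc a b) :=
    fun y => (hΨc y).prodMk continuousOn_id
  have hmaps : ∀ y, MapsTo (fun σ => (Ψ y σ, σ)) (Icc a b) (univ ×ˢ Icc a b) :=
    fun y σ hσ => ⟨mem_univ _, hσ⟩
  have hFΨ : ∀ y, ContinuousOn (fun σ => F (Ψ y σ) σ) (Icc a b) :=
    fun y => hF.comp (hcurve y) (hmaps y)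
  have hFxΨ : ∀ y, ContinuousOn (fun σ => pdx F (Ψ y σ) σ) (Icc a b) :=
    fun y => hFx.comp (hcurve y) (hmaps y)
  have hI : Ι a b ⊆ Icc a b := by rw [uIoc_of_le hab]; exact Ioc_subset_Icc_self
  have hdom := intervalIntegral.hasDerivAt_integral_of_dominated_loc_of_deriv_le
    (F := fun y σ => F (Ψ y σ) σ) (F' := fun y σ => pdx F (Ψ y σ) σ * pdx Ψ y σ)
    (x₀ := x) (bound := fun _ => M * B) (univ_mem)
    (Eventually.of_forall fun y => ((hFΨ y).mono hI).aestronglyMeasurable measurableSet_uIoc)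
    ((hFΨ x).intervalIntegrable_of_Icc hab)
    ((((hFxΨ x).mono hI).aestronglyMeasurable measurableSet_uIoc).mul
      ((aestronglyMeasurable_pdx measurableSet_Icc hΨc
        fun σ hσ => hΨd σ hσ x).mono_measure (Measure.restrict_mono hI le_rfl)))
    (ae_of_all _ fun σ hσ y _ => by
      rw [Real.norm_eq_abs, abs_mul]
      exact mul_le_mul (hFM _ σ (hI hσ)) (hΨB y σ (hI hσ)) (abs_nonneg _)
        ((abs_nonneg _).trans (hFM 0 σ (hI hσ))))
    intervalIntegrable_const
    (ae_of_all _ fun σ hσ y _ => hasDerivAt_pdx_comp (hFd σ (hI hσ) _) (hΨd σ (hI hσ) y))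
  refine hdom.2.congr_deriv (intervalIntegral.integral_congr fun σ hσ => ?_)
  rw [uIcc_of_le hab] at hσ
  exact (pdx_comp (hFd σ hσ _) (hΨd σ hσ x)).symm

end ParametricIntegral

namespace IsFlowOn

variable {v Ψ : ℝ → ℝ → ℝ} {ε T t : ℝ} {K : ℝ≥0}

theorem continuousOn (hΨ : IsFlowOn v Ψ ε (Ico (-ε) T)) (y : ℝ) :
    ContinuousOn (fun s => Ψ y s) (Ico (-ε) T) :=
  fun s hs => (hΨ.2 y s hs).continuousWithinAt

theorem hasDerivAt (hΨ : IsFlowOn v Ψ ε (Ico (-ε) T)) (y : ℝ) {s : ℝ} (hs : s ∈ Ioo (-ε) T) :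
    HasDerivAt (fun r => Ψ y r) (v (Ψ y s) s) s :=
  (hΨ.2 y s (Ioo_subset_Ico_self hs)).hasDerivAt (Ico_mem_nhds hs.1 hs.2)

theorem pdx_initial (hΨ : IsFlowOn v Ψ ε (Ico (-ε) T)) (y : ℝ) : pdx Ψ y (-ε) = 1 := by
  show deriv (fun y => Ψ y (-ε)) y = 1
  rw [funext hΨ.1, deriv_id'']

theorem continuousOn_comp (hΨ : IsFlowOn v Ψ ε (Ico (-ε) T)) {F : ℝ → ℝ → ℝ}
    (hF : ContinuousOn (fun p : ℝ × ℝ => F p.1 p.2) (univ ×ˢ Ico (-ε) T)) (y : ℝ) :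
    ContinuousOn (fun s => F (Ψ y s) s) (Ico (-ε) T) :=
  hF.comp ((hΨ.continuousOn y).prodMk continuousOn_id) fun _ hs => ⟨mem_univ _, hs⟩

theorem hasDerivAt_comp (hΨ : IsFlowOn v Ψ ε (Ico (-ε) T)) {F : ℝ → ℝ → ℝ} (y : ℝ) {s : ℝ}
    (hs : s ∈ Ioo (-ε) T) (hF : DifferentiableAt ℝ (fun p : ℝ × ℝ => F p.1 p.2) (Ψ y s, s)) :
    HasDerivAt (fun r => F (Ψ y r) r) (pdt F (Ψ y s) s + v (Ψ y s) s * pdx F (Ψ y s) s) s := by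
  rw [add_comm]
  exact hF.hasDerivAt_comp_curve (hΨ.hasDerivAt y hs)

theorem apply_eq_of_transport (hΨ : IsFlowOn v Ψ ε (Ico (-ε) T)) {F : ℝ → ℝ → ℝ}
    (hF : ContDiffOn ℝ 1 (fun p : ℝ × ℝ => F p.1 p.2) (univ ×ˢ Ico (-ε) T))
    (htr : ∀ θ, ∀ s ∈ Ioo (-ε) T, pdt F θ s + v θ s * pdx F θ s = 0) (y : ℝ) {s : ℝ}
    (hs : s ∈ Ico (-ε) T) : F (Ψ y s) s = F y (-ε) := by
  have hderiv : ∀ r ∈ Ioo (-ε) s, HasDerivAt (fun r => F (Ψ y r) r) 0 r := fun r hr => by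
    have hr' : r ∈ Ioo (-ε) T := ⟨hr.1, hr.2.trans hs.2⟩
    simpa [htr _ r hr'] using hΨ.hasDerivAt_comp y hr'
      ((hF.contDiffAt (prod_univ_Ico_mem_nhds hr')).differentiableAt one_ne_zero)
  have h := intervalIntegral.integral_eq_sub_of_hasDerivAt_of_le hs.1
    ((hΨ.continuousOn_comp hF.continuousOn y).mono (Icc_subset_Ico_right hs.2)) hderiv
    (by simp)
  rw [hΨ.1 y] at h
  simp only [intervalIntegral.integral_zero] at h
  linarith

theorem eq_add_integral (hΨ : IsFlowOn v Ψ ε (Ico (-ε) T))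
    (hv : ContinuousOn (fun p : ℝ × ℝ => v p.1 p.2) (univ ×ˢ Ico (-ε) T)) (y : ℝ) {s : ℝ}
    (hs : s ∈ Ico (-ε) T) : Ψ y s = y + ∫ σ in (-ε)..s, v (Ψ y σ) σ := by
  have hsub : Icc (-ε) s ⊆ Ico (-ε) T := Icc_subset_Ico_right hs.2
  have h := intervalIntegral.integral_eq_sub_of_hasDerivAt_of_le hs.1
    ((hΨ.continuousOn y).mono hsub) (fun r hr => hΨ.hasDerivAt y ⟨hr.1, hr.2.trans hs.2⟩)
    (((hΨ.continuousOn_comp hv y).mono hsub).intervalIntegrable_of_Icc hs.1)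
  rw [h, hΨ.1 y]
  ring

theorem dist_le (hΨ : IsFlowOn v Ψ ε (Ico (-ε) T)) (ht : t < T)
    (hv : ∀ s ∈ Ico (-ε) t, LipschitzWith K (fun θ => v θ s)) (y₁ y₂ : ℝ) :
    ∀ s ∈ Icc (-ε) t, dist (Ψ y₁ s) (Ψ y₂ s) ≤ dist y₁ y₂ * exp (K * (s + ε)) := by
  intro s hs
  have hderiv : ∀ r ∈ Ico (-ε) t, HasDerivWithinAt (fun r => Ψ y₁ r - Ψ y₂ r)
      (v (Ψ y₁ r) r - v (Ψ y₂ r) r) (Ici r) r := fun r hr => by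
    have hr' : r ∈ Ico (-ε) T := ⟨hr.1, hr.2.trans ht⟩
    have hmem : Ico (-ε) T ∈ 𝓝[≥] r := Ico_mem_nhdsGE_of_mem hr'
    exact ((hΨ.2 y₁ r hr').sub (hΨ.2 y₂ r hr')).mono_of_mem_nhdsWithin hmem
  have h := norm_le_gronwallBound_of_norm_deriv_right_le
    (f := fun r => Ψ y₁ r - Ψ y₂ r) (δ := dist y₁ y₂) (ε := 0)
    (((hΨ.continuousOn y₁).sub (hΨ.continuousOn y₂)).mono (Icc_subset_Ico_right ht)) hderiv
    (by rw [hΨ.1, hΨ.1, Real.dist_eq, Real.norm_eq_abs])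
    (fun r hr => by simpa [← Real.dist_eq] using (hv r hr).dist_le_mul (Ψ y₁ r) (Ψ y₂ r)) s hs
  rwa [gronwallBound_ε0, sub_neg_eq_add, ← dist_eq_norm] at h

theorem abs_pdx_le (hΨ : IsFlowOn v Ψ ε (Ico (-ε) T))
    (hv : ContDiffOn ℝ 1 (fun p : ℝ × ℝ => v p.1 p.2) (univ ×ˢ Ico (-ε) T)) (ht : t < T)
    (hK : ∀ θ, ∀ s ∈ Icc (-ε) t, |pdx v θ s| ≤ K) (y : ℝ) :
    ∀ s ∈ Icc (-ε) t, |pdx Ψ y s| ≤ exp (K * (t + ε)) := by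
  intro s hs
  have hlip : ∀ r ∈ Ico (-ε) t, LipschitzWith K (fun θ => v θ r) := fun r hr =>
    lipschitzWith_of_nnnorm_deriv_le
      ((hv.contDiff_slice (Icc_subset_Ico_right ht (Ico_subset_Icc_self hr))).differentiable
        one_ne_zero)
      fun θ => by
        rw [← NNReal.coe_le_coe, coe_nnnorm]
        exact hK θ r (Ico_subset_Icc_self hr)
  have hΨlip : LipschitzWith (⟨exp (K * (t + ε)), (exp_pos _).le⟩ : ℝ≥0) (fun y => Ψ y s) :=
    LipschitzWith.of_dist_le_mul fun y₁ y₂ => by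
      have h := hΨ.dist_le ht hlip y₁ y₂ s hs
      have hexp : exp (K * (s + ε)) ≤ exp (K * (t + ε)) := by gcongr; exact hs.2
      show dist (Ψ y₁ s) (Ψ y₂ s) ≤ exp (K * (t + ε)) * dist y₁ y₂
      nlinarith [dist_nonneg (x := y₁) (y := y₂)]
  exact norm_deriv_le_of_lipschitz hΨlip

theorem pdx_eq_one_add_integral (hΨ : IsFlowOn v Ψ ε (Ico (-ε) T))
    (hv : ContDiffOn ℝ 1 (fun p : ℝ × ℝ => v p.1 p.2) (univ ×ˢ Ico (-ε) T))
    (hΨd : ∀ s ∈ Ico (-ε) T, Differentiable ℝ (fun y => Ψ y s)) (ht : t < T)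
    (hK : ∀ θ, ∀ s ∈ Icc (-ε) t, |pdx v θ s| ≤ K) (y : ℝ) :
    ∀ s ∈ Icc (-ε) t, pdx Ψ y s = 1 + ∫ σ in (-ε)..s, pdx (fun y σ => v (Ψ y σ) σ) y σ := by
  intro s hs
  have hsub : Icc (-ε) s ⊆ Ico (-ε) T := Icc_subset_Ico_right (hs.2.trans_lt ht)
  have hsub' : Icc (-ε) s ⊆ Icc (-ε) t := Icc_subset_Icc_right hs.2
  have hprod : (univ ×ˢ Icc (-ε) s : Set (ℝ × ℝ)) ⊆ univ ×ˢ Ico (-ε) T := prod_mono le_rfl hsub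
  have hint := hasDerivAt_integral_comp (x := y) hs.1 (hv.continuousOn.mono hprod)
    ((hv.continuousOn_pdx (uniqueDiffOn_Ico _ _)).mono hprod)
    (fun σ hσ => (hv.contDiff_slice (hsub hσ)).differentiable one_ne_zero)
    (fun θ σ hσ => hK θ σ (hsub' hσ)) (fun y' => (hΨ.continuousOn y').mono hsub)
    (fun σ hσ => hΨd σ (hsub hσ)) (fun y' σ hσ => hΨ.abs_pdx_le hv ht hK y' σ (hsub' hσ))
  have hfun : (fun y' => Ψ y' s) = fun y' => y' + ∫ σ in (-ε)..s, v (Ψ y' σ) σ :=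
    funext fun y' => hΨ.eq_add_integral hv.continuousOn y' ⟨hs.1, hs.2.trans_lt ht⟩
  show deriv (fun y' => Ψ y' s) y = _
  rw [hfun]
  exact ((hasDerivAt_id' y).add hint).deriv

theorem pdx_eq_exp_integral (hΨ : IsFlowOn v Ψ ε (Ico (-ε) T))
    (hv : ContDiffOn ℝ 1 (fun p : ℝ × ℝ => v p.1 p.2) (univ ×ˢ Ico (-ε) T))
    (hΨd : ∀ s ∈ Ico (-ε) T, Differentiable ℝ (fun y => Ψ y s)) (ht : t < T)
    (hK : ∀ θ, ∀ s ∈ Icc (-ε) t, |pdx v θ s| ≤ K) (y : ℝ) :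
    ∀ s ∈ Icc (-ε) t, pdx Ψ y s = exp (∫ σ in (-ε)..s, pdx v (Ψ y σ) σ) := by
  have hsub : Icc (-ε) t ⊆ Ico (-ε) T := Icc_subset_Ico_right ht
  have hq : ContinuousOn (fun σ => pdx v (Ψ y σ) σ) (Icc (-ε) t) :=
    (hΨ.continuousOn_comp (hv.continuousOn_pdx (uniqueDiffOn_Ico _ _)) y).mono hsub
  have hmeas := aestronglyMeasurable_pdx (x := y) measurableSet_Icc
    (fun y' => (hΨ.continuousOn y').mono hsub) fun σ hσ => hΨd σ (hsub hσ) y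
  have hqg : IntegrableOn (fun σ => pdx v (Ψ y σ) σ * pdx Ψ y σ) (Icc (-ε) t) := by
    refine Integrable.mono' (g := fun _ => K * exp (K * (t + ε)))
      (integrableOn_const measure_Icc_lt_top.ne)
      ((hq.aestronglyMeasurable measurableSet_Icc).mul hmeas) ?_
    rw [ae_restrict_iff' measurableSet_Icc]
    refine ae_of_all _ fun σ hσ => ?_
    rw [Real.norm_eq_abs, abs_mul]
    exact mul_le_mul (hK _ σ hσ) (hΨ.abs_pdx_le hv ht hK y σ hσ) (abs_nonneg _) K.2
  refine eq_exp_integral_of_eq_one_add_integral hq hqg fun s hs => ?_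
  rw [hΨ.pdx_eq_one_add_integral hv hΨd ht hK y s hs]
  congr 1
  refine intervalIntegral.integral_congr fun σ hσ => ?_
  rw [uIcc_of_le hs.1] at hσ
  have hσ' : σ ∈ Ico (-ε) T := hsub (Icc_subset_Icc_right hs.2 hσ)
  exact pdx_comp ((hv.contDiff_slice hσ').differentiable one_ne_zero _) (hΨd σ hσ' y)

theorem pdx_pos_of_periodic (hΨ : IsFlowOn v Ψ ε (Ico (-ε) T))
    (hv : ContDiffOn ℝ 1 (fun p : ℝ × ℝ => v p.1 p.2) (univ ×ˢ Ico (-ε) T)) {p : ℝ} (hp : 0 < p)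
    (hvper : ∀ s, Function.Periodic (fun θ => v θ s) p)
    (hΨd : ∀ s ∈ Ico (-ε) T, Differentiable ℝ (fun y => Ψ y s)) (y : ℝ) (ht : t ∈ Ico (-ε) T) :
    0 < pdx Ψ y t := by
  obtain ⟨K, hK⟩ := exists_abs_pdx_le_of_periodic hp (uniqueDiffOn_Ico _ _) hv hvper
    isCompact_Icc (Icc_subset_Ico_right ht.2)
  rw [hΨ.pdx_eq_exp_integral hv hΨd ht.2 hK y t ⟨ht.1, le_rfl⟩]
  exact exp_pos _

theorem continuousOn_pdx (hΨ : IsFlowOn v Ψ ε (Ico (-ε) T))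
    (hv : ContDiffOn ℝ 1 (fun p : ℝ × ℝ => v p.1 p.2) (univ ×ˢ Ico (-ε) T))
    (hΨd : ∀ s ∈ Ico (-ε) T, Differentiable ℝ (fun y => Ψ y s)) (ht : t < T)
    (hK : ∀ θ, ∀ s ∈ Icc (-ε) t, |pdx v θ s| ≤ K) (y : ℝ) :
    ContinuousOn (fun s => pdx Ψ y s) (Icc (-ε) t) := by
  have hq : ContinuousOn (fun σ => pdx v (Ψ y σ) σ) (Icc (-ε) t) :=
    (hΨ.continuousOn_comp (hv.continuousOn_pdx (uniqueDiffOn_Ico _ _)) y).mono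
      (Icc_subset_Ico_right ht)
  exact (hq.integrableOn_compact isCompact_Icc).continuousOn_primitive.rexp.congr
    (hΨ.pdx_eq_exp_integral hv hΨd ht hK y)

theorem continuousOn_pdx_comp (hΨ : IsFlowOn v Ψ ε (Ico (-ε) T))
    (hv : ContDiffOn ℝ 1 (fun p : ℝ × ℝ => v p.1 p.2) (univ ×ˢ Ico (-ε) T))
    (hΨd : ∀ s ∈ Ico (-ε) T, Differentiable ℝ (fun y => Ψ y s)) (ht : t < T)
    (hK : ∀ θ, ∀ s ∈ Icc (-ε) t, |pdx v θ s| ≤ K) {F : ℝ → ℝ → ℝ}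
    (hF : ContDiffOn ℝ 1 (fun p : ℝ × ℝ => F p.1 p.2) (univ ×ˢ Ico (-ε) T)) (x : ℝ) :
    ContinuousOn (fun σ => pdx (fun y σ => F (Ψ y σ) σ) x σ) (Icc (-ε) t) := by
  have hsub : Icc (-ε) t ⊆ Ico (-ε) T := Icc_subset_Ico_right ht
  refine (((hΨ.continuousOn_comp (hF.continuousOn_pdx (uniqueDiffOn_Ico _ _)) x).mono hsub).mul
    (hΨ.continuousOn_pdx hv hΨd ht hK x)).congr fun σ hσ => ?_
  exact pdx_comp ((hF.contDiff_slice (hsub hσ)).differentiable one_ne_zero _) (hΨd σ (hsub hσ) x)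

theorem hasDerivAt_pdx_in_time (hΨ : IsFlowOn v Ψ ε (Ico (-ε) T))
    (hv : ContDiffOn ℝ 1 (fun p : ℝ × ℝ => v p.1 p.2) (univ ×ˢ Ico (-ε) T))
    (hΨd : ∀ s ∈ Ico (-ε) T, Differentiable ℝ (fun y => Ψ y s)) (ht : t < T)
    (hK : ∀ θ, ∀ s ∈ Icc (-ε) t, |pdx v θ s| ≤ K) (y : ℝ) {s : ℝ} (hs : s ∈ Ioo (-ε) t) :
    HasDerivAt (fun r => pdx Ψ y r) (pdx v (Ψ y s) s * pdx Ψ y s) s := by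
  have hq : ContinuousOn (fun σ => pdx v (Ψ y σ) σ) (Icc (-ε) t) :=
    (hΨ.continuousOn_comp (hv.continuousOn_pdx (uniqueDiffOn_Ico _ _)) y).mono
      (Icc_subset_Ico_right ht)
  have hexp := (hq.hasDerivAt_primitive hs).exp
  rw [← hΨ.pdx_eq_exp_integral hv hΨd ht hK y s (Ioo_subset_Icc_self hs), mul_comm] at hexp
  refine hexp.congr_of_eventuallyEq ?_
  filter_upwards [Icc_mem_nhds hs.1 hs.2] with r hr
    using hΨ.pdx_eq_exp_integral hv hΨd ht hK y r hr

theorem hasDerivAt_pdx_in_space (hΨ : IsFlowOn v Ψ ε (Ico (-ε) T))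
    (hv : ContDiffOn ℝ 2 (fun p : ℝ × ℝ => v p.1 p.2) (univ ×ˢ Ico (-ε) T))
    (hΨd : ∀ s ∈ Ico (-ε) T, Differentiable ℝ (fun y => Ψ y s)) (ht : t < T)
    (hK : ∀ θ, ∀ s ∈ Icc (-ε) t, |pdx v θ s| ≤ K) {K₂ : ℝ≥0}
    (hK₂ : ∀ θ, ∀ s ∈ Icc (-ε) t, |pdx (pdx v) θ s| ≤ K₂) (x : ℝ) {s : ℝ}
    (hs : s ∈ Icc (-ε) t) :
    HasDerivAt (fun y => pdx Ψ y s)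
      (pdx Ψ x s * ∫ σ in (-ε)..s, pdx (fun y σ => pdx v (Ψ y σ) σ) x σ) x := by
  have hv1 : ContDiffOn ℝ 1 (fun p : ℝ × ℝ => v p.1 p.2) (univ ×ˢ Ico (-ε) T) :=
    hv.of_le one_le_two
  have hvx : ContDiffOn ℝ 1 (fun p : ℝ × ℝ => pdx v p.1 p.2) (univ ×ˢ Ico (-ε) T) :=
    hv.contDiffOn_pdx (uniqueDiffOn_Ico _ _)
  have hsub : Icc (-ε) s ⊆ Ico (-ε) T := Icc_subset_Ico_right (hs.2.trans_lt ht)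
  have hsub' : Icc (-ε) s ⊆ Icc (-ε) t := Icc_subset_Icc_right hs.2
  have hprod : (univ ×ˢ Icc (-ε) s : Set (ℝ × ℝ)) ⊆ univ ×ˢ Ico (-ε) T := prod_mono le_rfl hsub
  have hint := hasDerivAt_integral_comp (x := x) hs.1 (hvx.continuousOn.mono hprod)
    ((hvx.continuousOn_pdx (uniqueDiffOn_Ico _ _)).mono hprod)
    (fun σ hσ => (hvx.contDiff_slice (hsub hσ)).differentiable one_ne_zero)
    (fun θ σ hσ => hK₂ θ σ (hsub' hσ)) (fun y' => (hΨ.continuousOn y').mono hsub)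
    (fun σ hσ => hΨd σ (hsub hσ)) (fun y' σ hσ => hΨ.abs_pdx_le hv1 ht hK y' σ (hsub' hσ))
  have hfun : (fun y => pdx Ψ y s) = fun y => exp (∫ σ in (-ε)..s, pdx v (Ψ y σ) σ) :=
    funext fun y => hΨ.pdx_eq_exp_integral hv1 hΨd ht hK y s hs
  have hexp := hint.exp
  rw [← hfun, ← hΨ.pdx_eq_exp_integral hv1 hΨd ht hK x s hs] at hexp
  exact hexp

theorem hasDerivAt_pdx_mul_pdx_comp (hΨ : IsFlowOn v Ψ ε (Ico (-ε) T))
    (hv : ContDiffOn ℝ 1 (fun p : ℝ × ℝ => v p.1 p.2) (univ ×ˢ Ico (-ε) T))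
    (hΨd : ∀ s ∈ Ico (-ε) T, Differentiable ℝ (fun y => Ψ y s)) (ht : t < T)
    (hK : ∀ θ, ∀ s ∈ Icc (-ε) t, |pdx v θ s| ≤ K) {L G : ℝ → ℝ → ℝ}
    (hL : ContDiffOn ℝ 2 (fun p : ℝ × ℝ => L p.1 p.2) (univ ×ˢ Ico (-ε) T))
    (hG : ContDiffOn ℝ 1 (fun p : ℝ × ℝ => G p.1 p.2) (univ ×ˢ Ico (-ε) T))
    (htr : ∀ θ, ∀ s ∈ Ioo (-ε) T, pdt L θ s + v θ s * pdx L θ s = G θ s) (x : ℝ) {s : ℝ}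
    (hs : s ∈ Ioo (-ε) t) :
    HasDerivAt (fun r => pdx Ψ x r * pdx L (Ψ x r) r) (pdx (fun y σ => G (Ψ y σ) σ) x s) s := by
  have hs' : s ∈ Ioo (-ε) T := ⟨hs.1, hs.2.trans ht⟩
  have hnhds := prod_univ_Ico_mem_nhds (θ := Ψ x s) hs'
  have hLx : ContDiffOn ℝ 1 (fun p : ℝ × ℝ => pdx L p.1 p.2) (univ ×ˢ Ico (-ε) T) :=
    hL.contDiffOn_pdx (uniqueDiffOn_Ico _ _)
  have hslice : ∀ {F : ℝ → ℝ → ℝ},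
      ContDiffOn ℝ 1 (fun p : ℝ × ℝ => F p.1 p.2) (univ ×ˢ Ico (-ε) T) →
      DifferentiableAt ℝ (fun y => F y s) (Ψ x s) := fun hF =>
    (hF.contDiff_slice (Ioo_subset_Ico_self hs')).differentiable one_ne_zero _
  have hLtr := pdt_pdx_add_mul_pdx_pdx (hL.contDiffAt hnhds) (hslice hLx) (hslice hv)
    (hslice hG) fun y => htr y s hs'
  have h : HasDerivAt (fun r => pdx Ψ x r * pdx L (Ψ x r) r)
      (pdx v (Ψ x s) s * pdx Ψ x s * pdx L (Ψ x s) s + pdx Ψ x s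
        * (pdt (pdx L) (Ψ x s) s + v (Ψ x s) s * pdx (pdx L) (Ψ x s) s)) s :=
    (hΨ.hasDerivAt_pdx_in_time hv hΨd ht hK x hs).mul
      (hΨ.hasDerivAt_comp x hs' ((hLx.contDiffAt hnhds).differentiableAt one_ne_zero))
  rw [hLtr] at h
  rw [pdx_comp (hslice hG) (hΨd s (Ioo_subset_Ico_self hs') x)]
  convert h using 1
  ring

theorem pdx_mul_pdx_comp_eq (hΨ : IsFlowOn v Ψ ε (Ico (-ε) T))
    (hv : ContDiffOn ℝ 1 (fun p : ℝ × ℝ => v p.1 p.2) (univ ×ˢ Ico (-ε) T))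
    (hΨd : ∀ s ∈ Ico (-ε) T, Differentiable ℝ (fun y => Ψ y s)) (ht : t < T)
    (hK : ∀ θ, ∀ s ∈ Icc (-ε) t, |pdx v θ s| ≤ K) {L G : ℝ → ℝ → ℝ}
    (hL : ContDiffOn ℝ 2 (fun p : ℝ × ℝ => L p.1 p.2) (univ ×ˢ Ico (-ε) T))
    (hG : ContDiffOn ℝ 1 (fun p : ℝ × ℝ => G p.1 p.2) (univ ×ˢ Ico (-ε) T))
    (htr : ∀ θ, ∀ s ∈ Ioo (-ε) T, pdt L θ s + v θ s * pdx L θ s = G θ s) (x : ℝ) {s : ℝ}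
    (hs : s ∈ Icc (-ε) t) :
    pdx Ψ x s * pdx L (Ψ x s) s
      = pdx L x (-ε) + ∫ σ in (-ε)..s, pdx (fun y σ => G (Ψ y σ) σ) x σ := by
  have hsub : Icc (-ε) s ⊆ Icc (-ε) t := Icc_subset_Icc_right hs.2
  have hLx : ContinuousOn (fun p : ℝ × ℝ => pdx L p.1 p.2) (univ ×ˢ Ico (-ε) T) :=
    (hL.contDiffOn_pdx (n := 1) (uniqueDiffOn_Ico _ _)).continuousOn
  have hcont : ContinuousOn (fun r => pdx Ψ x r * pdx L (Ψ x r) r) (Icc (-ε) s) :=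
    ((hΨ.continuousOn_pdx hv hΨd ht hK x).mul
      ((hΨ.continuousOn_comp hLx x).mono (Icc_subset_Ico_right ht))).mono hsub
  rw [intervalIntegral.integral_eq_sub_of_hasDerivAt_of_le hs.1 hcont
    (fun r hr => hΨ.hasDerivAt_pdx_mul_pdx_comp hv hΨd ht hK hL hG htr x
      ⟨hr.1, hr.2.trans_le hs.2⟩)
    (((hΨ.continuousOn_pdx_comp hv hΨd ht hK hG x).mono hsub).intervalIntegrable_of_Icc hs.1),
    hΨ.pdx_initial, hΨ.1]
  ring

theorem integral_pdx_comp_sub (hΨ : IsFlowOn v Ψ ε (Ico (-ε) T))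
    (hv : ContDiffOn ℝ 1 (fun p : ℝ × ℝ => v p.1 p.2) (univ ×ˢ Ico (-ε) T))
    (hΨd : ∀ s ∈ Ico (-ε) T, Differentiable ℝ (fun y => Ψ y s)) (ht : t < T)
    (hK : ∀ θ, ∀ s ∈ Icc (-ε) t, |pdx v θ s| ≤ K) {F G : ℝ → ℝ → ℝ}
    (hF : ContDiffOn ℝ 1 (fun p : ℝ × ℝ => F p.1 p.2) (univ ×ˢ Ico (-ε) T))
    (hG : ContDiffOn ℝ 1 (fun p : ℝ × ℝ => G p.1 p.2) (univ ×ˢ Ico (-ε) T)) (α β x : ℝ)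
    {s : ℝ} (hs : s ∈ Icc (-ε) t) :
    ∫ σ in (-ε)..s, pdx (fun y σ => α * F (Ψ y σ) σ - β * G (Ψ y σ) σ) x σ
      = α * (∫ σ in (-ε)..s, pdx (fun y σ => F (Ψ y σ) σ) x σ)
        - β * ∫ σ in (-ε)..s, pdx (fun y σ => G (Ψ y σ) σ) x σ := by
  have hsub : Icc (-ε) s ⊆ Ico (-ε) T := Icc_subset_Ico_right (hs.2.trans_lt ht)
  have hcomp : ∀ {H : ℝ → ℝ → ℝ},
      ContDiffOn ℝ 1 (fun p : ℝ × ℝ => H p.1 p.2) (univ ×ˢ Ico (-ε) T) →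
      (∀ σ ∈ Icc (-ε) s, DifferentiableAt ℝ (fun y => H (Ψ y σ) σ) x) ∧
      IntervalIntegrable (fun σ => pdx (fun y σ => H (Ψ y σ) σ) x σ) volume (-ε) s :=
    fun hH => ⟨fun σ hσ => ((hH.contDiff_slice (hsub hσ)).differentiable one_ne_zero _).comp x
      (hΨd σ (hsub hσ) x), ((hΨ.continuousOn_pdx_comp hv hΨd ht hK hH x).mono
        (Icc_subset_Icc_right hs.2)).intervalIntegrable_of_Icc hs.1⟩
  have hpointwise : ∀ σ ∈ uIcc (-ε) s,
      pdx (fun y σ => α * F (Ψ y σ) σ - β * G (Ψ y σ) σ) x σ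
        = α * pdx (fun y σ => F (Ψ y σ) σ) x σ - β * pdx (fun y σ => G (Ψ y σ) σ) x σ :=
    fun σ hσ => by
      rw [uIcc_of_le hs.1] at hσ
      exact ((((hcomp hF).1 σ hσ).hasDerivAt.const_mul α).sub
        (((hcomp hG).1 σ hσ).hasDerivAt.const_mul β)).deriv
  rw [intervalIntegral.integral_congr hpointwise,
    intervalIntegral.integral_sub ((hcomp hF).2.const_mul _) ((hcomp hG).2.const_mul _),
    intervalIntegral.integral_const_mul, intervalIntegral.integral_const_mul]

end IsFlowOn

section Euler

variable {w z k a c : ℝ → ℝ → ℝ} {ε T : ℝ}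

theorem contDiffOn_lam2 {n : WithTop ℕ∞} {S : Set (ℝ × ℝ)}
    (hw : ContDiffOn ℝ n (fun p : ℝ × ℝ => w p.1 p.2) S)
    (hz : ContDiffOn ℝ n (fun p : ℝ × ℝ => z p.1 p.2) S) :
    ContDiffOn ℝ n (fun p : ℝ × ℝ => lam2 (w p.1 p.2) (z p.1 p.2)) S := by
  unfold lam2
  exact contDiffOn_const.mul (hw.add hz)

theorem lam2_periodic (hwper : ∀ θ t : ℝ, w (θ + 2 * π) t = w θ t)
    (hzper : ∀ θ t : ℝ, z (θ + 2 * π) t = z θ t) (s : ℝ) :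
    Function.Periodic (fun θ => lam2 (w θ s) (z θ s)) (2 * π) := fun θ => by
  simp only [hwper, hzper]

/-- The `∂_θk` sources of the `w`- and `z`-equations cancel in `c = (w - z) / 2`. -/
theorem log_transport_of_eulerEq
    (hw : ContDiffOn ℝ 1 (fun p : ℝ × ℝ => w p.1 p.2) (univ ×ˢ Ico (-ε) T))
    (hz : ContDiffOn ℝ 1 (fun p : ℝ × ℝ => z p.1 p.2) (univ ×ˢ Ico (-ε) T))
    (heuler : ∀ θ : ℝ, ∀ t ∈ Ico (-ε) T, EulerEq w z k a θ t)
    (hc : ∀ θ t : ℝ, c θ t = (w θ t - z θ t) / 2)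
    (hcpos : ∀ θ : ℝ, ∀ t ∈ Ico (-ε) T, 0 < c θ t) :
    ∀ θ, ∀ s ∈ Ioo (-ε) T,
      pdt (fun θ s => log (c θ s)) θ s
          + lam2 (w θ s) (z θ s) * pdx (fun θ s => log (c θ s)) θ s
        = -(8 / 3) * a θ s - 1 / 2 * pdx (fun θ s => lam2 (w θ s) (z θ s)) θ s := by
  intro θ s hs
  have hnhds := prod_univ_Ico_mem_nhds (θ := θ) hs
  have hwd := (hw.contDiffAt hnhds).differentiableAt one_ne_zero
  have hzd := (hz.contDiffAt hnhds).differentiableAt one_ne_zero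
  have hcne : c θ s ≠ 0 := (hcpos θ s (Ioo_subset_Ico_self hs)).ne'
  have hcfun : c = fun θ s => (w θ s - z θ s) / 2 := funext fun θ => funext (hc θ)
  have hLx : HasDerivAt (fun y => log (c y s)) ((pdx w θ s - pdx z θ s) / 2 / c θ s) θ := by
    refine HasDerivAt.log ?_ hcne
    rw [hcfun]
    exact (hwd.hasDerivAt_pdx.sub hzd.hasDerivAt_pdx).div_const 2
  have hLt : HasDerivAt (fun r => log (c θ r)) ((pdt w θ s - pdt z θ s) / 2 / c θ s) s := by
    refine HasDerivAt.log ?_ hcne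
    rw [hcfun]
    exact (hwd.hasDerivAt_pdt.sub hzd.hasDerivAt_pdt).div_const 2
  have hlamx : HasDerivAt (fun y => lam2 (w y s) (z y s)) (2 / 3 * (pdx w θ s + pdx z θ s)) θ :=
    (hwd.hasDerivAt_pdx.add hzd.hasDerivAt_pdx).const_mul _
  obtain ⟨hEw, hEz, -, -⟩ := heuler θ s (Ioo_subset_Ico_self hs)
  rw [show pdx (fun θ s => log (c θ s)) θ s = _ from hLx.deriv,
    show pdt (fun θ s => log (c θ s)) θ s = _ from hLt.deriv,
    show pdx (fun θ s => lam2 (w θ s) (z θ s)) θ s = _ from hlamx.deriv]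
  have key : (pdt w θ s - pdt z θ s) / 2 + lam2 (w θ s) (z θ s) * ((pdx w θ s - pdx z θ s) / 2)
      = c θ s * (-(8 / 3) * a θ s - 1 / 2 * (2 / 3 * (pdx w θ s + pdx z θ s))) := by
    rw [hc]
    simp only [lam1, lam2, lam3] at hEw hEz ⊢
    linear_combination (1 / 2) * (hEw - hEz)
  calc _ = ((pdt w θ s - pdt z θ s) / 2
        + lam2 (w θ s) (z θ s) * ((pdx w θ s - pdx z θ s) / 2)) / c θ s := by ring
    _ = _ := by rw [key]; field_simp

theorem pdx_pdx_flow_eq_of_eulerEq {ϕ : ℝ → ℝ → ℝ}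
    (hw : ContDiffOn ℝ 2 (fun p : ℝ × ℝ => w p.1 p.2) (univ ×ˢ Ico (-ε) T))
    (hz : ContDiffOn ℝ 2 (fun p : ℝ × ℝ => z p.1 p.2) (univ ×ˢ Ico (-ε) T))
    (ha : ContDiffOn ℝ 1 (fun p : ℝ × ℝ => a p.1 p.2) (univ ×ˢ Ico (-ε) T))
    (hwper : ∀ θ t : ℝ, w (θ + 2 * π) t = w θ t) (hzper : ∀ θ t : ℝ, z (θ + 2 * π) t = z θ t)
    (heuler : ∀ θ : ℝ, ∀ t ∈ Ico (-ε) T, EulerEq w z k a θ t)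
    (hc : ∀ θ t : ℝ, c θ t = (w θ t - z θ t) / 2)
    (hcpos : ∀ θ : ℝ, ∀ t ∈ Ico (-ε) T, 0 < c θ t)
    (hϕ : IsFlowOn (fun θ t => lam2 (w θ t) (z θ t)) ϕ ε (Ico (-ε) T))
    (hϕd : ∀ s ∈ Ico (-ε) T, Differentiable ℝ (fun y => ϕ y s)) (x : ℝ) {t : ℝ}
    (ht : t ∈ Ico (-ε) T) :
    pdx (fun y s => pdx ϕ y s) x t
      = pdx ϕ x t * (2 * deriv (fun y => c y (-ε)) x / c x (-ε)
          - 16 / 3 * ∫ τ in (-ε)..t, pdx (fun y s => a (ϕ y s) s) x τ)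
        - 2 * (pdx ϕ x t) ^ 2 * ((c (ϕ x t) t)⁻¹ * pdx c (ϕ x t) t) := by
  set lam : ℝ → ℝ → ℝ := fun θ s => lam2 (w θ s) (z θ s)
  have hJ : UniqueDiffOn ℝ (Ico (-ε) T) := uniqueDiffOn_Ico _ _
  have hlam : ContDiffOn ℝ 2 (fun p : ℝ × ℝ => lam p.1 p.2) (univ ×ˢ Ico (-ε) T) :=
    contDiffOn_lam2 hw hz
  have hlam1 := hlam.of_le one_le_two
  have hlamx : ContDiffOn ℝ 1 (fun p : ℝ × ℝ => pdx lam p.1 p.2) (univ ×ˢ Ico (-ε) T) :=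
    hlam.contDiffOn_pdx hJ
  have hlamper : ∀ s, Function.Periodic (fun θ => lam θ s) (2 * π) := lam2_periodic hwper hzper
  obtain ⟨K, hK⟩ := exists_abs_pdx_le_of_periodic two_pi_pos hJ hlam1 hlamper isCompact_Icc
    (Icc_subset_Ico_right ht.2)
  obtain ⟨K₂, hK₂⟩ := exists_abs_pdx_le_of_periodic two_pi_pos hJ hlamx (pdx_periodic hlamper)
    isCompact_Icc (Icc_subset_Ico_right ht.2)
  have hc2 : ContDiffOn ℝ 2 (fun p : ℝ × ℝ => c p.1 p.2) (univ ×ˢ Ico (-ε) T) :=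
    ((hw.sub hz).div_const 2).congr fun p _ => hc p.1 p.2
  have hpdx_log : ∀ θ, ∀ s ∈ Ico (-ε) T,
      pdx (fun θ s => log (c θ s)) θ s = (c θ s)⁻¹ * pdx c θ s := fun θ s hs =>
    pdx_log ((hc2.contDiff_slice hs).differentiable two_ne_zero θ) (hcpos θ s hs).ne'
  have htrans := hϕ.pdx_mul_pdx_comp_eq hlam1 hϕd ht.2 hK
    (hc2.log fun p hp => (hcpos p.1 p.2 hp.2).ne')
    ((contDiffOn_const.mul ha).sub (contDiffOn_const.mul hlamx))
    (log_transport_of_eulerEq (hw.of_le one_le_two) (hz.of_le one_le_two) heuler hc hcpos) x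
    ⟨ht.1, le_rfl⟩
  rw [hϕ.integral_pdx_comp_sub hlam1 hϕd ht.2 hK ha hlamx _ _ x ⟨ht.1, le_rfl⟩, hpdx_log _ _ ht,
    hpdx_log x (-ε) ⟨le_rfl, ht.1.trans_lt ht.2⟩] at htrans
  rw [show pdx (fun y s => pdx ϕ y s) x t = _ from
      (hϕ.hasDerivAt_pdx_in_space hlam hϕd ht.2 hK hK₂ x ⟨ht.1, le_rfl⟩).deriv,
    show deriv (fun y => c y (-ε)) x = pdx c x (-ε) from rfl]
  linear_combination (2 * pdx ϕ x t) * htrans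

end Euler

theorem entropy_along_two_characteristics_general
    (ε T : ℝ)
    (w z k a : ℝ → ℝ → ℝ)
    (hw : ContDiffOn ℝ 2 (fun p : ℝ × ℝ => w p.1 p.2) (univ ×ˢ Ico (-ε) T))
    (hz : ContDiffOn ℝ 2 (fun p : ℝ × ℝ => z p.1 p.2) (univ ×ˢ Ico (-ε) T))
    (hk : ContDiffOn ℝ 2 (fun p : ℝ × ℝ => k p.1 p.2) (univ ×ˢ Ico (-ε) T))
    (ha : ContDiffOn ℝ 2 (fun p : ℝ × ℝ => a p.1 p.2) (univ ×ˢ Ico (-ε) T))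
    (hwper : ∀ θ t : ℝ, w (θ + 2 * π) t = w θ t)
    (hzper : ∀ θ t : ℝ, z (θ + 2 * π) t = z θ t)
    (heuler : ∀ θ : ℝ, ∀ t ∈ Ico (-ε) T, EulerEq w z k a θ t)
    (c : ℝ → ℝ → ℝ) (hc : ∀ θ t : ℝ, c θ t = (w θ t - z θ t) / 2)
    (hcpos : ∀ θ : ℝ, ∀ t ∈ Ico (-ε) T, 0 < c θ t)
    (k₀ : ℝ → ℝ) (hk₀ : ∀ x : ℝ, k₀ x = k x (-ε))
    (ϕ : ℝ → ℝ → ℝ)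
    (hϕ : IsFlowOn (fun θ t => lam2 (w θ t) (z θ t)) ϕ ε (Ico (-ε) T))
    (hϕx : ∀ t ∈ Ico (-ε) T, ContDiff ℝ 2 (fun y => ϕ y t))
    (Φ : ℝ → ℝ → ℝ)
    (hΦ : ∀ x t : ℝ,
      Φ x t = 2 * deriv (fun y => c y (-ε)) x / c x (-ε)
        - 16 / 3 * ∫ τ in (-ε)..t, pdx (fun y s => a (ϕ y s) s) x τ)
    (E : ℝ → ℝ → ℝ)
    (hE : ∀ θ t : ℝ, E θ t
      = pdx (fun θ' t' => pdx k θ' t') θ t - 2 * (c θ t)⁻¹ * pdx c θ t * pdx k θ t) :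
    ∀ x : ℝ, ∀ t ∈ Ico (-ε) T,
      -- (i) entropy is transported
      (k (ϕ x t) t = k₀ x) ∧
      -- (ii) first derivative
      (pdx ϕ x t * pdx k (ϕ x t) t = deriv k₀ x) ∧
      -- (iii) second spatial derivative of the flow
      (pdx (fun y s => pdx ϕ y s) x t
        = pdx ϕ x t * Φ x t
          - 2 * (pdx ϕ x t) ^ 2 * ((c (ϕ x t) t)⁻¹ * pdx c (ϕ x t) t)) ∧
      -- (iv) second derivative of the entropy
      ((pdx ϕ x t) ^ 2 * pdx (fun θ' t' => pdx k θ' t') (ϕ x t) t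
        = iteratedDeriv 2 k₀ x - Φ x t * deriv k₀ x
          + 2 * (pdx ϕ x t) ^ 2
              * ((c (ϕ x t) t)⁻¹ * pdx c (ϕ x t) t * pdx k (ϕ x t) t)) ∧
      -- (iv') equivalently, in terms of `𝓔 = ∂²_θk − 2c⁻¹∂_θc ∂_θk`
      (E (ϕ x t) t = (pdx ϕ x t)⁻¹ ^ 2 * (iteratedDeriv 2 k₀ x - Φ x t * deriv k₀ x)) := by
  intro x t ht
  have hϕd : ∀ s ∈ Ico (-ε) T, Differentiable ℝ (fun y => ϕ y s) :=
    fun s hs => (hϕx s hs).differentiable two_ne_zero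
  have hi : ∀ y, k (ϕ y t) t = k₀ y := fun y =>
    (hϕ.apply_eq_of_transport (hk.of_le one_le_two)
      (fun θ s hs => (heuler θ s (Ioo_subset_Ico_self hs)).2.2.1) y ht).trans (hk₀ y).symm
  have hii : ∀ y, pdx ϕ y t * pdx k (ϕ y t) t = deriv k₀ y :=
    pdx_mul_pdx_comp_eq_deriv ((hk.contDiff_slice ht).differentiable two_ne_zero) (hϕd t ht) hi
  have hiii := pdx_pdx_flow_eq_of_eulerEq hw hz (ha.of_le one_le_two) hwper hzper heuler hc hcpos
    hϕ hϕd x ht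
  rw [← hΦ] at hiii
  have hiv : pdx ϕ x t ^ 2 * pdx (fun θ' t' => pdx k θ' t') (ϕ x t) t
      = iteratedDeriv 2 k₀ x - Φ x t * deriv k₀ x
        + 2 * pdx ϕ x t ^ 2 * ((c (ϕ x t) t)⁻¹ * pdx c (ϕ x t) t * pdx k (ϕ x t) t) := by
    rw [iteratedDeriv_two_eq_of_comp (hk.contDiff_slice ht) (hϕx t ht) hi, ← hii x, hiii]
    ring
  have hpos : pdx ϕ x t ≠ 0 := (hϕ.pdx_pos_of_periodic (contDiffOn_lam2 hw hz |>.of_le one_le_two)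
    two_pi_pos (lam2_periodic hwper hzper) hϕd x ht).ne'
  refine ⟨hi x, hii x, hiii, hiv, ?_⟩
  rw [hE]
  field_simp
  linear_combination hiv

/-- Transport of the entropy and its derivatives along the
2-characteristics. -/
theorem entropy_along_two_characteristics
    (ε T : ℝ) (hT : -ε < T)
    (w z k a : ℝ → ℝ → ℝ)
    (hw : ContDiffOn ℝ 2 (fun p : ℝ × ℝ => w p.1 p.2) (univ ×ˢ Ico (-ε) T))
    (hz : ContDiffOn ℝ 2 (fun p : ℝ × ℝ => z p.1 p.2) (univ ×ˢ Ico (-ε) T))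
    (hk : ContDiffOn ℝ 2 (fun p : ℝ × ℝ => k p.1 p.2) (univ ×ˢ Ico (-ε) T))
    (ha : ContDiffOn ℝ 2 (fun p : ℝ × ℝ => a p.1 p.2) (univ ×ˢ Ico (-ε) T))
    (hwper : ∀ θ t : ℝ, w (θ + 2 * π) t = w θ t)
    (hzper : ∀ θ t : ℝ, z (θ + 2 * π) t = z θ t)
    (hkper : ∀ θ t : ℝ, k (θ + 2 * π) t = k θ t)
    (haper : ∀ θ t : ℝ, a (θ + 2 * π) t = a θ t)
    (heuler : ∀ θ : ℝ, ∀ t ∈ Ico (-ε) T, EulerEq w z k a θ t)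
    (c : ℝ → ℝ → ℝ) (hc : ∀ θ t : ℝ, c θ t = (w θ t - z θ t) / 2)
    (hcpos : ∀ θ : ℝ, ∀ t ∈ Ico (-ε) T, 0 < c θ t)
    (k₀ : ℝ → ℝ) (hk₀ : ∀ x : ℝ, k₀ x = k x (-ε))
    (ϕ : ℝ → ℝ → ℝ)
    (hϕ : IsFlowOn (fun θ t => lam2 (w θ t) (z θ t)) ϕ ε (Ico (-ε) T))
    (hϕx : ∀ t ∈ Ico (-ε) T, ContDiff ℝ 2 (fun y => ϕ y t))
    (Φ : ℝ → ℝ → ℝ)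
    (hΦ : ∀ x t : ℝ,
      Φ x t = 2 * deriv (fun y => c y (-ε)) x / c x (-ε)
        - 16 / 3 * ∫ τ in (-ε)..t, pdx (fun y s => a (ϕ y s) s) x τ)
    (E : ℝ → ℝ → ℝ)
    (hE : ∀ θ t : ℝ, E θ t
      = pdx (fun θ' t' => pdx k θ' t') θ t - 2 * (c θ t)⁻¹ * pdx c θ t * pdx k θ t) :
    ∀ x : ℝ, ∀ t ∈ Ico (-ε) T,
      -- (i) entropy is transported
      (k (ϕ x t) t = k₀ x) ∧
      -- (ii) first derivative
      (pdx ϕ x t * pdx k (ϕ x t) t = deriv k₀ x) ∧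
      -- (iii) second spatial derivative of the flow
      (pdx (fun y s => pdx ϕ y s) x t
        = pdx ϕ x t * Φ x t
          - 2 * (pdx ϕ x t) ^ 2 * ((c (ϕ x t) t)⁻¹ * pdx c (ϕ x t) t)) ∧
      -- (iv) second derivative of the entropy
      ((pdx ϕ x t) ^ 2 * pdx (fun θ' t' => pdx k θ' t') (ϕ x t) t
        = iteratedDeriv 2 k₀ x - Φ x t * deriv k₀ x
          + 2 * (pdx ϕ x t) ^ 2
              * ((c (ϕ x t) t)⁻¹ * pdx c (ϕ x t) t * pdx k (ϕ x t) t)) ∧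
      -- (iv') equivalently, in terms of `𝓔 = ∂²_θk − 2c⁻¹∂_θc ∂_θk`
      (E (ϕ x t) t = (pdx ϕ x t)⁻¹ ^ 2 * (iteratedDeriv 2 k₀ x - Φ x t * deriv k₀ x)) :=
  entropy_along_two_characteristics_general ε T w z k a hw hz hk ha hwper hzper heuler c hc hcpos k₀
    hk₀ ϕ hϕ hϕx Φ hΦ E hE
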